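/- arXiv:2009.02378 — 2 statements merged into one kernel-verified Lean document; each statement's English description precedes it below -/
import Mathlib

section
/- Let n, m ≥ 1, let a : Fin n → Fin n → ℝ be symmetric (a(i,j) = a(j,i)), let β ∈ ℝ, let x_i : ℝ → ℝ^m (i = 1,…,n) be arbitrary functions, and let G_i : ℝ → ℝ^m (i = 1,…,n) be differentiable functions satisfying, for every t ≥ 0 and every i, the dynamics G_i'(t) = −β · ∑_{j=1}^n a(i,j) · sgn(x_i(t) − x_j(t)) − G_i(t), where sgn acts componentwise. Then for all t ≥ 0, ∑_{i=1}^n G_i(t) = e^{−t} · ∑_{i=1}^n G_i(0); in particular ∑_{i=1}^n G_i(t) → 0 as t → ∞. -/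
open Filter

/-!
Summing the dynamics over all agents, the interaction terms `a i j • sgn (x i - x j)` cancel in
pairs because `a` is symmetric and `sgn` is odd. Hence `S = ∑ i, G i` solves `S' = -S` on
`[0, ∞)`, so `t ↦ exp t • S t` has zero derivative there and `S t = exp (-t) • S 0`.
-/

theorem Finset.sum_sum_eq_zero_of_antisymm {ι M : Type*} [AddCommGroup M] [IsAddTorsionFree M]
    (s : Finset ι) {f : ι → ι → M} (hf : ∀ i j, f j i = -f i j) :
    ∑ i ∈ s, ∑ j ∈ s, f i j = 0 := by
  refine self_eq_neg.mp ?_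
  calc ∑ i ∈ s, ∑ j ∈ s, f i j
      = ∑ i ∈ s, ∑ j ∈ s, f j i := Finset.sum_comm
    _ = ∑ i ∈ s, ∑ j ∈ s, -f i j :=
        Finset.sum_congr rfl fun i _ => Finset.sum_congr rfl fun j _ => hf i j
    _ = -∑ i ∈ s, ∑ j ∈ s, f i j := by simp only [Finset.sum_neg_distrib]

theorem Finset.sum_sum_smul_odd_sub_eq_zero {ι R E F : Type*} [Monoid R] [AddCommGroup E]
    [AddCommGroup F] [IsAddTorsionFree F] [DistribMulAction R F] (s : Finset ι)
    {a : ι → ι → R} (hsym : ∀ i j, a i j = a j i) {φ : E → F} (hφ : φ.Odd) (x : ι → E) :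
    ∑ i ∈ s, ∑ j ∈ s, a i j • φ (x i - x j) = 0 :=
  Finset.sum_sum_eq_zero_of_antisymm s fun i j => by
    rw [hsym j i, ← neg_sub, hφ, smul_neg]

theorem Real.odd_pi_sign (m : Type*) : Function.Odd fun v : m → ℝ => fun k => Real.sign (v k) :=
  fun v => funext fun k => by simp [Real.sign_neg]

theorem eq_exp_mul_smul_of_hasDerivAt_smul_self {E : Type*} [NormedAddCommGroup E]
    [NormedSpace ℝ E] {S : ℝ → E} {c : ℝ} (hS : ∀ t, 0 ≤ t → HasDerivAt S (c • S t) t)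
    {t : ℝ} (ht : 0 ≤ t) : S t = Real.exp (c * t) • S 0 := by
  set H : ℝ → E := fun u => Real.exp (-c * u) • S u
  have hH : ∀ u, 0 ≤ u → HasDerivAt H 0 u := fun u hu => by
    have hexp : HasDerivAt (fun u => Real.exp (-c * u)) (Real.exp (-c * u) * -c) u := by
      simpa using ((hasDerivAt_id u).const_mul (-c)).exp
    convert hexp.smul (hS u hu) using 1
    · rfl
    rw [smul_smul, ← add_smul, mul_neg, add_neg_cancel, zero_smul]
  have hconst : H t = H 0 :=
    constant_of_has_deriv_right_zero
      (fun u hu => (hH u hu.1).continuousAt.continuousWithinAt)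
      (fun u hu => (hH u hu.1).hasDerivWithinAt) t ⟨ht, le_rfl⟩
  simp only [H, mul_zero, Real.exp_zero, one_smul] at hconst
  rw [← hconst, smul_smul, ← Real.exp_add, ← add_mul, add_neg_cancel, zero_mul, Real.exp_zero,
    one_smul]

theorem stmt_6_general (n m : ℕ)
    (a : Fin n → Fin n → ℝ) (hsym : ∀ i j, a i j = a j i) (β : ℝ)
    (x : Fin n → ℝ → Fin m → ℝ) (G : Fin n → ℝ → Fin m → ℝ)
    (hGdiff : ∀ i, Differentiable ℝ (G i))
    (hdyn : ∀ i, ∀ t : ℝ, 0 ≤ t →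
      deriv (G i) t =
        -β • (∑ j : Fin n, a i j • (fun k : Fin m => Real.sign ((x i t - x j t) k)))
          - G i t) :
    (∀ t : ℝ, 0 ≤ t →
        ∑ i : Fin n, G i t = Real.exp (-t) • ∑ i : Fin n, G i 0) ∧
      Tendsto (fun t : ℝ => ∑ i : Fin n, G i t) atTop (nhds 0) := by
  have hS : ∀ t, 0 ≤ t → HasDerivAt (fun t => ∑ i, G i t) ((-1 : ℝ) • ∑ i, G i t) t := by
    intro t ht
    rw [neg_one_smul]
    have hsum := HasDerivAt.fun_sum fun i (_ : i ∈ Finset.univ) => (hGdiff i t).hasDerivAt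
    rwa [Finset.sum_congr rfl fun i _ => hdyn i t ht, Finset.sum_sub_distrib, ← Finset.smul_sum,
      Finset.sum_sum_smul_odd_sub_eq_zero _ hsym (Real.odd_pi_sign (Fin m)) (x · t), smul_zero,
      zero_sub] at hsum
  have hsol : ∀ t, 0 ≤ t → ∑ i, G i t = Real.exp (-t) • ∑ i, G i 0 := fun t ht => by
    simpa using eq_exp_mul_smul_of_hasDerivAt_smul_self hS ht
  refine ⟨hsol, ?_⟩
  have hlim : Tendsto (fun t => Real.exp (-t) • ∑ i, G i 0) atTop (nhds 0) := by
    simpa using Real.tendsto_exp_neg_atTop_nhds_zero.smul_const (∑ i, G i 0)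
  exact hlim.congr' <| (eventually_ge_atTop 0).mono fun t ht => (hsol t ht).symm

/-- Core of Lemma 3: if the gradients `G_i` obey the closed-loop dynamics
`G_i' t = -β • ∑ j a i j • sgn (x_i t - x_j t) - G_i t` for `t ≥ 0` with
symmetric weights `a`, then `∑ i, G_i t = e^{-t} • ∑ i, G_i 0` for all `t ≥ 0`,
and in particular `∑ i, G_i t → 0` as `t → ∞`. -/
theorem stmt_6 (n m : ℕ) (hn : 1 ≤ n) (hm : 1 ≤ m)
    (a : Fin n → Fin n → ℝ) (hsym : ∀ i j, a i j = a j i) (β : ℝ)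
    (x : Fin n → ℝ → Fin m → ℝ) (G : Fin n → ℝ → Fin m → ℝ)
    (hGdiff : ∀ i, Differentiable ℝ (G i))
    (hdyn : ∀ i, ∀ t : ℝ, 0 ≤ t →
      deriv (G i) t =
        -β • (∑ j : Fin n, a i j • (fun k : Fin m => Real.sign ((x i t - x j t) k)))
          - G i t) :
    (∀ t : ℝ, 0 ≤ t →
        ∑ i : Fin n, G i t = Real.exp (-t) • ∑ i : Fin n, G i 0) ∧
      Tendsto (fun t : ℝ => ∑ i : Fin n, G i t) atTop (nhds 0) :=
  stmt_6_general n m a hsym β x G hGdiff hdyn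
end

section
/- Let f : ℝ^m → ℝ and g_1, …, g_q : ℝ^m → ℝ be differentiable convex functions and let ρ > 0. Suppose x̄ ∈ ℝ^m satisfies g_j(x̄) < 1/ρ for all j and the barrier stationarity condition ∇f(x̄) + ∑_{j=1}^q (1/(1 − ρ·g_j(x̄))) · ∇g_j(x̄) = 0. Suppose y* ∈ ℝ^m satisfies g_j(y*) ≤ 0 for all j, and there exist Lagrange multipliers ν_1, …, ν_q ≥ 0 such that f(y*) ≤ f(x) + ∑_{j=1}^q ν_j·g_j(x) for all x ∈ ℝ^m. Then |f(x̄) − f(y*)| ≤ (q + ∑_{j=1}^q ν_j)/ρ. -/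
/-!
Put `w_j = 1 / (1 - ρ g_j x̄) > 0`. The stationarity condition says that `x̄` is a critical
point of the convex function `L = f + ∑ w_j g_j`, hence a global minimiser of `L`; comparing
with the feasible point `y*`, where `∑ w_j g_j ≤ 0`, gives `f x̄ ≤ f y* + q / ρ`, because
`w_j g_j x̄ = (w_j - 1) / ρ ≥ -1 / ρ`. Conversely, the saddle-point inequality at `x̄`
together with `g_j x̄ < 1 / ρ` gives `f y* ≤ f x̄ + (∑ ν_j) / ρ`.
-/

open Finset

theorem ConvexOn.fun_sum {𝕜 E β ι : Type*} [Semiring 𝕜] [PartialOrder 𝕜] [AddCommMonoid E]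
    [SMul 𝕜 E] [AddCommMonoid β] [PartialOrder β] [IsOrderedAddMonoid β] [Module 𝕜 β]
    {s : Set E} (hs : Convex 𝕜 s) {f : ι → E → β} (t : Finset ι)
    (hf : ∀ i ∈ t, ConvexOn 𝕜 s (f i)) : ConvexOn 𝕜 s fun x ↦ ∑ i ∈ t, f i x := by
  classical
  induction t using Finset.induction_on with
  | empty => simpa using convexOn_const (0 : β) hs
  | insert i t hi ih =>
    simp_rw [sum_insert hi]
    exact (hf i (mem_insert_self i t)).add (ih fun j hj ↦ hf j (mem_insert_of_mem hj))

theorem ConvexOn.add_fderiv_sub_le {E : Type*} [NormedAddCommGroup E] [NormedSpace ℝ E]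
    {f : E → ℝ} {f' : E →L[ℝ] ℝ} {x : E} (hf : ConvexOn ℝ Set.univ f)
    (hx : HasFDerivAt f f' x) (y : E) : f x + f' (y - x) ≤ f y := by
  have hline : ConvexOn ℝ Set.univ (f ∘ AffineMap.lineMap (k := ℝ) x y) := by
    simpa using hf.comp_affineMap (AffineMap.lineMap (k := ℝ) x y)
  have hderiv : HasDerivAt (f ∘ AffineMap.lineMap (k := ℝ) x y) (f' (y - x)) 0 := by
    refine HasFDerivAt.comp_hasDerivAt (0 : ℝ) ?_ AffineMap.hasDerivAt_lineMap
    simpa using hx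
  have := hline.le_slope_of_hasDerivAt (Set.mem_univ 0) (Set.mem_univ 1) one_pos hderiv
  simp only [slope_def_field, Function.comp_apply, AffineMap.lineMap_apply_one,
    AffineMap.lineMap_apply_zero, sub_zero, div_one] at this
  linarith

theorem hasGradientAt_add_sum_mul {F ι : Type*} [NormedAddCommGroup F] [InnerProductSpace ℝ F]
    [CompleteSpace F] {f : F → ℝ} {g : ι → F → ℝ} {x : F} (t : Finset ι) (w : ι → ℝ)
    (hf : DifferentiableAt ℝ f x) (hg : ∀ j ∈ t, DifferentiableAt ℝ (g j) x) :
    HasGradientAt (fun y ↦ f y + ∑ j ∈ t, w j * g j y)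
      (gradient f x + ∑ j ∈ t, w j • gradient (g j) x) x := by
  rw [hasGradientAt_iff_hasFDerivAt, map_add, map_sum]
  simp only [map_smul, toDual_gradient]
  exact hf.hasFDerivAt.add (.fun_sum fun j hj ↦ (hg j hj).hasFDerivAt.const_mul (w j))

theorem one_sub_mul_pos_of_lt_one_div {ρ t : ℝ} (hρ : 0 < ρ) (ht : t < 1 / ρ) :
    0 < 1 - ρ * t := by
  rw [lt_div_iff₀ hρ] at ht
  linarith

theorem neg_one_div_le_one_div_one_sub_mul_mul {ρ t : ℝ} (hρ : 0 < ρ) (ht : 0 < 1 - ρ * t) :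
    -(1 / ρ) ≤ 1 / (1 - ρ * t) * t := by
  have hw : 1 / (1 - ρ * t) * t = (1 / (1 - ρ * t) - 1) / ρ := by
    field_simp
    ring
  rw [hw, ← neg_div]
  gcongr
  linarith [one_div_pos.2 ht]

theorem le_add_card_div_of_barrier_stationary {F ι : Type*} [NormedAddCommGroup F]
    [InnerProductSpace ℝ F] [CompleteSpace F] [Fintype ι] {f : F → ℝ} {g : ι → F → ℝ}
    {ρ : ℝ} {xbar y : F} (hf : DifferentiableAt ℝ f xbar) (hfconv : ConvexOn ℝ Set.univ f)
    (hg : ∀ j, DifferentiableAt ℝ (g j) xbar) (hgconv : ∀ j, ConvexOn ℝ Set.univ (g j))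
    (hρ : 0 < ρ) (hxbar : ∀ j, g j xbar < 1 / ρ)
    (hstat : gradient f xbar + ∑ j, (1 / (1 - ρ * g j xbar)) • gradient (g j) xbar = 0)
    (hy : ∀ j, g j y ≤ 0) :
    f xbar ≤ f y + Fintype.card ι / ρ := by
  set w : ι → ℝ := fun j ↦ 1 / (1 - ρ * g j xbar)
  have hden : ∀ j, 0 < 1 - ρ * g j xbar := fun j ↦ one_sub_mul_pos_of_lt_one_div hρ (hxbar j)
  have hw : ∀ j, 0 ≤ w j := fun j ↦ (one_div_pos.2 (hden j)).le
  have hLconv : ConvexOn ℝ Set.univ fun x ↦ f x + ∑ j, w j * g j x :=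
    hfconv.add (.fun_sum convex_univ _ fun j _ ↦ (hgconv j).smul (hw j))
  have hLcrit : HasFDerivAt (fun x ↦ f x + ∑ j, w j * g j x) (0 : F →L[ℝ] ℝ) xbar := by
    have := hasGradientAt_add_sum_mul univ w hf fun j _ ↦ hg j
    rwa [hstat, hasGradientAt_iff_hasFDerivAt, map_zero] at this
  have hmin := hLconv.add_fderiv_sub_le hLcrit y
  have hxbar_sum : -(Fintype.card ι / ρ) ≤ ∑ j, w j * g j xbar :=
    calc -(Fintype.card ι / ρ) = ∑ _j : ι, -(1 / ρ) := by
          rw [sum_const, card_univ, nsmul_eq_mul]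
          ring
      _ ≤ ∑ j, w j * g j xbar :=
          sum_le_sum fun j _ ↦ neg_one_div_le_one_div_one_sub_mul_mul hρ (hden j)
  have hy_sum : ∑ j, w j * g j y ≤ 0 :=
    sum_nonpos fun j _ ↦ mul_nonpos_of_nonneg_of_nonpos (hw j) (hy j)
  simp only [zero_apply, add_zero] at hmin
  linarith

theorem le_add_sum_div_of_le_add_sum_mul {ι : Type*} [Fintype ι] {a b ρ : ℝ} {ν c : ι → ℝ}
    (hν : ∀ j, 0 ≤ ν j) (hc : ∀ j, c j ≤ 1 / ρ) (h : a ≤ b + ∑ j, ν j * c j) :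
    a ≤ b + (∑ j, ν j) / ρ := by
  have : ∑ j, ν j * c j ≤ ∑ j, ν j * (1 / ρ) :=
    sum_le_sum fun j _ ↦ mul_le_mul_of_nonneg_left (hc j) (hν j)
  rw [← sum_mul, mul_one_div] at this
  linarith

/-- Combined value bound from the proof of Theorem 1: if `x̄` is a stationary
point of the log-barrier penalized objective and `y*` is a KKT point of the
constrained problem (with multipliers `ν_j ≥ 0` giving the Lagrangian
saddle-point property), then `|f x̄ - f y*| ≤ (q + ∑ j ν_j)/ρ`. -/
theorem stmt_9 (m q : ℕ) (f : EuclideanSpace ℝ (Fin m) → ℝ)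
    (g : Fin q → EuclideanSpace ℝ (Fin m) → ℝ)
    (hf : Differentiable ℝ f) (hfconv : ConvexOn ℝ Set.univ f)
    (hg : ∀ j, Differentiable ℝ (g j)) (hgconv : ∀ j, ConvexOn ℝ Set.univ (g j))
    (ρ : ℝ) (hρ : 0 < ρ)
    (xbar : EuclideanSpace ℝ (Fin m)) (hxbar : ∀ j, g j xbar < 1 / ρ)
    (hstat : gradient f xbar +
      ∑ j : Fin q, (1 / (1 - ρ * g j xbar)) • gradient (g j) xbar = 0)
    (ystar : EuclideanSpace ℝ (Fin m)) (hfeas : ∀ j, g j ystar ≤ 0)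
    (ν : Fin q → ℝ) (hν : ∀ j, 0 ≤ ν j)
    (hsaddle : ∀ x : EuclideanSpace ℝ (Fin m),
      f ystar ≤ f x + ∑ j : Fin q, ν j * g j x) :
    |f xbar - f ystar| ≤ (q + ∑ j : Fin q, ν j) / ρ := by
  have hupper : f xbar ≤ f ystar + q / ρ := by
    simpa using le_add_card_div_of_barrier_stationary (hf xbar) hfconv (fun j ↦ hg j xbar)
      hgconv hρ hxbar hstat hfeas
  have hlower : f ystar ≤ f xbar + (∑ j, ν j) / ρ :=
    le_add_sum_div_of_le_add_sum_mul hν (fun j ↦ (hxbar j).le) (hsaddle xbar)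
  have hq : 0 ≤ (q : ℝ) / ρ := by positivity
  have hνsum : 0 ≤ (∑ j, ν j) / ρ := div_nonneg (sum_nonneg fun j _ ↦ hν j) hρ.le
  rw [abs_sub_le_iff, add_div]
  constructor <;> linarith
end
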